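/- Let K ≥ 3, 1 > θ_1 > θ_2 > … > θ_K > 0, ε = 0, and 0 < c < θ_2(1−θ_1), so that μ* := μ((1,2)) = −c + θ_1 + (1−θ_1)θ_2 is the optimal mean reward. Consider minimizing Σ_{u∈U} η_u (μ* − μ(u)) over all η : U → [0,∞) subject to, for every k ∈ {3,…,K}, η_{(k)} + η_{(k,1)} ≥ 1/I(θ_k, θ_2). The minimum value equals C(θ) = Σ_{k=3}^K (1−θ_1)(θ_2−θ_k)/I(θ_k, θ_2), and it is attained by η* with η*_{(k,1)} = 1/I(θ_k, θ_2) for each k ≥ 3 and η*_u = 0 for every other policy u. -/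

import Mathlib

noncomputable section

/-- `p0 ε x = ε x + (1−ε)(1−x)`: probability that the ε-noisy measurement of a
Bernoulli(x) arm returns 0. -/
def p0 (ε x : ℝ) : ℝ := ε * x + (1 - ε) * (1 - x)

/-- A static policy: either play arm `k` directly, or measure arm `k` and play
arm `l` if the measurement is 1 and arm `m` if it is 0. -/
inductive Policy where
  | play (k : ℕ)
  | meas (k l m : ℕ)
deriving DecidableEq

/-- Mean reward `μ(u)` of a static policy `u`, with arm means `θ`, noise level `ε`,
and measurement cost `c`. -/
def reward (θ : ℕ → ℝ) (ε c : ℝ) : Policy → ℝ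
  | .play k => θ k
  | .meas k l m =>
      -c + (if l = k then (1 - ε) * θ k else (1 - p0 ε (θ k)) * θ l)
         + (if m = k then ε * θ k else p0 ε (θ k) * θ m)

/-- The finite set `U` of all static policies on arms `{1,…,K}`. -/
def allPolicies (K : ℕ) : Finset Policy :=
  ((Finset.Icc 1 K).image Policy.play) ∪
  (((Finset.Icc 1 K) ×ˢ (Finset.Icc 1 K) ×ˢ (Finset.Icc 1 K)).image
    fun p => Policy.meas p.1 p.2.1 p.2.2)

/-- `I(p,q)`: KL divergence between Bernoulli(p) and Bernoulli(q). -/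
def klBer (p q : ℝ) : ℝ :=
  p * Real.log (p / q) + (1 - p) * Real.log ((1 - p) / (1 - q))

/-- The optimal solution `η*` of the lower-bound LP in Case 1:
`η*_{(k,1)} = 1/I(θ_k,θ_2)` for `3 ≤ k ≤ K`, zero elsewhere. -/
def etaStar6 (K : ℕ) (θ : ℕ → ℝ) : Policy → ℝ
  | .meas k l m =>
      if l = k ∧ m = 1 ∧ 3 ≤ k ∧ k ≤ K then 1 / klBer (θ k) (θ 2) else 0
  | .play _ => 0

/-! With perfect measurements every policy in `U` earns at most `μ((1,2))`, so every term of the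
objective is nonnegative. Keeping only the terms at `(k)` and `(k,1)` for `k ≥ 3`: the policy
`(k,1)` loses exactly `(1-θ₁)(θ₂-θ_k)`, and `(k)` loses at least as much since `c < θ₂(1-θ₁)`,
so the constraint on `η_{(k)} + η_{(k,1)}` bounds the objective below by `C(θ)`. The point `η*`
is feasible and puts all its weight on the policies `(k,1)`, so it attains `C(θ)`. -/

open Finset InformationTheory

lemma klBer_eq_klFun {p q : ℝ} (hq0 : q ≠ 0) (hq1 : q ≠ 1) :
    klBer p q = q * klFun (p / q) + (1 - q) * klFun ((1 - p) / (1 - q)) := by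
  have hq1' : 1 - q ≠ 0 := sub_ne_zero.mpr (Ne.symm hq1)
  simp only [klBer, klFun_apply]
  field_simp
  ring

lemma klBer_nonneg {p q : ℝ} (hp0 : 0 ≤ p) (hp1 : p ≤ 1) (hq0 : 0 < q) (hq1 : q < 1) :
    0 ≤ klBer p q := by
  rw [klBer_eq_klFun hq0.ne' hq1.ne]
  have h1q : 0 < 1 - q := sub_pos.mpr hq1
  exact add_nonneg (mul_nonneg hq0.le (klFun_nonneg (div_nonneg hp0 hq0.le)))
    (mul_nonneg h1q.le (klFun_nonneg (div_nonneg (sub_nonneg.mpr hp1) h1q.le)))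

lemma add_one_sub_mul_le_add_one_sub_mul {a t x y : ℝ} (hx : x ≤ 1) (hy : y ≤ 1)
    (ha : a ≤ x) (ht : t ≤ x) (h : a ≤ y ∨ t ≤ y) :
    a + (1 - a) * t ≤ x + (1 - x) * y := by
  rcases h with h | h
  · nlinarith [mul_le_mul (sub_le_sub_left h 1) (sub_le_sub_left ht 1)
      (sub_nonneg.mpr hx) (by linarith)]
  · nlinarith [mul_le_mul (sub_le_sub_left ha 1) (sub_le_sub_left h 1)
      (sub_nonneg.mpr hy) (by linarith)]

section Reward

variable (θ : ℕ → ℝ) (c : ℝ)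

@[simp]
lemma reward_play (ε : ℝ) (k : ℕ) : reward θ ε c (.play k) = θ k := rfl

lemma reward_zero_meas (k l m : ℕ) :
    reward θ 0 c (.meas k l m) =
      -c + (if l = k then θ k else θ k * θ l) + (if m = k then 0 else (1 - θ k) * θ m) := by
  simp only [reward, p0]
  split_ifs <;> ring

lemma reward_zero_meas_self {k m : ℕ} (hmk : m ≠ k) :
    reward θ 0 c (.meas k k m) = -c + θ k + (1 - θ k) * θ m := by
  rw [reward_zero_meas, if_pos rfl, if_neg hmk]

end Reward

lemma mem_allPolicies_play {K k : ℕ} :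
    Policy.play k ∈ allPolicies K ↔ k ∈ Icc 1 K := by
  simp [allPolicies]

lemma mem_allPolicies_meas {K k l m : ℕ} :
    Policy.meas k l m ∈ allPolicies K ↔ k ∈ Icc 1 K ∧ l ∈ Icc 1 K ∧ m ∈ Icc 1 K := by
  simp [allPolicies]

lemma sum_play_add_meas_le_sum {K m : ℕ} {s : Finset ℕ} (hs : s ⊆ Icc 1 K) (hm : m ∈ Icc 1 K)
    {f : Policy → ℝ} (hf : ∀ u ∈ allPolicies K, 0 ≤ f u) :
    ∑ k ∈ s, (f (.play k) + f (.meas k k m)) ≤ ∑ u ∈ allPolicies K, f u := by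
  rw [sum_add_distrib, ← sum_image (g := Policy.play) (by simp),
    ← sum_image (g := fun k ↦ Policy.meas k k m) (by simp), ← sum_union (by simp [disjoint_left])]
  refine sum_le_sum_of_subset_of_nonneg (union_subset ?_ ?_) fun u hu _ ↦ hf u hu
  · exact image_subset_iff.mpr fun k hk ↦ mem_allPolicies_play.mpr (hs hk)
  · exact image_subset_iff.mpr fun k hk ↦ mem_allPolicies_meas.mpr ⟨hs hk, hs hk, hm⟩

section EtaStar

variable (K : ℕ) (θ : ℕ → ℝ)

lemma etaStar6_meas_self_one {k : ℕ} (hk : k ∈ Icc 3 K) :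
    etaStar6 K θ (.meas k k 1) = 1 / klBer (θ k) (θ 2) := by
  simp_all [etaStar6]

lemma etaStar6_eq_zero {u : Policy} (hu : u ∉ (Icc 3 K).image fun k ↦ Policy.meas k k 1) :
    etaStar6 K θ u = 0 := by
  rcases u with k | ⟨k, l, m⟩
  · rfl
  · simp only [mem_image, mem_Icc, Policy.meas.injEq] at hu
    simp only [etaStar6]
    split_ifs with h
    · exact absurd ⟨k, ⟨h.2.2.1, h.2.2.2⟩, rfl, h.1.symm, h.2.1.symm⟩ hu
    · rfl

lemma sum_etaStar6_mul (g : Policy → ℝ) :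
    ∑ u ∈ allPolicies K, etaStar6 K θ u * g u =
      ∑ k ∈ Icc 3 K, g (.meas k k 1) / klBer (θ k) (θ 2) := by
  have hsub : (Icc 3 K).image (fun k ↦ Policy.meas k k 1) ⊆ allPolicies K :=
    image_subset_iff.mpr fun k hk ↦ mem_allPolicies_meas.mpr (by simp at hk ⊢; omega)
  rw [← sum_subset hsub fun u _ hu ↦ by rw [etaStar6_eq_zero K θ hu, zero_mul],
    sum_image (by simp)]
  exact sum_congr rfl fun k hk ↦ by rw [etaStar6_meas_self_one K θ hk, one_div_mul_eq_div]

lemma etaStar6_nonneg (hI : ∀ k ∈ Icc 3 K, 0 ≤ klBer (θ k) (θ 2)) (u : Policy) :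
    0 ≤ etaStar6 K θ u := by
  by_cases hu : u ∈ (Icc 3 K).image fun k ↦ Policy.meas k k 1
  · obtain ⟨k, hk, rfl⟩ := mem_image.mp hu
    rw [etaStar6_meas_self_one K θ hk]
    exact one_div_nonneg.mpr (hI k hk)
  · exact (etaStar6_eq_zero K θ hu).ge

lemma le_etaStar6_play_add_meas {k : ℕ} (h3 : 3 ≤ k) (hkK : k ≤ K) :
    1 / klBer (θ k) (θ 2) ≤ etaStar6 K θ (.play k) + etaStar6 K θ (.meas k k 1) := by
  rw [etaStar6_meas_self_one K θ (mem_Icc.mpr ⟨h3, hkK⟩)]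
  exact le_add_of_nonneg_left le_rfl

end EtaStar

section Arms

variable {K : ℕ} {θ : ℕ → ℝ} {c : ℝ}

lemma reward_le_of_mem_allPolicies (hθ : AntitoneOn θ (Set.Icc 1 K)) (h2K : 2 ≤ K)
    (hK0 : 0 ≤ θ K) (h1 : θ 1 ≤ 1) (hc : c ≤ θ 2 * (1 - θ 1)) {u : Policy}
    (hu : u ∈ allPolicies K) :
    reward θ 0 c u ≤ -c + θ 1 + (1 - θ 1) * θ 2 := by
  have le_first : ∀ i ∈ Icc 1 K, θ i ≤ θ 1 := fun i hi ↦
    hθ (by simp; omega) (by simpa using hi) (mem_Icc.mp hi).1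
  have nonneg : ∀ i ∈ Icc 1 K, 0 ≤ θ i := fun i hi ↦
    hK0.trans (hθ (by simpa using hi) (by simp; omega) (mem_Icc.mp hi).2)
  have le_second : ∀ i ∈ Icc 1 K, 2 ≤ i → θ i ≤ θ 2 := fun i hi h2 ↦
    hθ (by simp; omega) (by simpa using hi) h2
  have hθ2 : 0 ≤ θ 2 := nonneg 2 (by simp; omega)
  have hgap : 0 ≤ (1 - θ 1) * θ 2 := mul_nonneg (sub_nonneg.mpr h1) hθ2
  rcases u with k | ⟨k, l, m⟩
  · rw [mem_allPolicies_play] at hu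
    rw [reward_play]
    linarith [le_first k hu]
  · obtain ⟨hk, hl, hm⟩ := mem_allPolicies_meas.mp hu
    have hA : (if l = k then θ k else θ k * θ l) ≤ θ k := by
      split_ifs
      · rfl
      · exact mul_le_of_le_one_right (nonneg k hk) ((le_first l hl).trans h1)
    rw [reward_zero_meas]
    refine (add_le_add_left (add_le_add_right hA _) _).trans ?_
    split_ifs with hmk
    · linarith [le_first k hk]
    · -- of two distinct arms, at most one is the best arm
      have h := add_one_sub_mul_le_add_one_sub_mul h1 ((le_first 2 (by simp; omega)).trans h1)
        (le_first k hk) (le_first m hm) (by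
          rcases Nat.lt_or_ge k 2 with hk2 | hk2
          · exact Or.inr (le_second m hm (by simp at hk hm; omega))
          · exact Or.inl (le_second k hk hk2))
      linarith

lemma klBer_arm_nonneg (hθ : AntitoneOn θ (Set.Icc 1 K)) (hK0 : 0 < θ K) (h1 : θ 1 < 1)
    {k : ℕ} (hk : k ∈ Icc 2 K) : 0 ≤ klBer (θ k) (θ 2) := by
  obtain ⟨h2, hkK⟩ := mem_Icc.mp hk
  have h21 : θ 2 ≤ θ 1 := hθ (by simp; omega) (by simp; omega) (by norm_num)
  have hk2 : θ k ≤ θ 2 := hθ (by simp; omega) (by simp; omega) h2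
  have hKk : θ K ≤ θ k := hθ (by simp; omega) (by simp; omega) hkK
  exact klBer_nonneg (by linarith) (by linarith) (by linarith) (by linarith)

lemma sum_gap_div_klBer_le (hθ : AntitoneOn θ (Set.Icc 1 K)) (h2K : 2 ≤ K)
    (hK0 : 0 ≤ θ K) (h1 : θ 1 ≤ 1) (hc : c ≤ θ 2 * (1 - θ 1)) {η : Policy → ℝ}
    (hη0 : ∀ u, 0 ≤ η u)
    (hη : ∀ k, 3 ≤ k → k ≤ K → 1 / klBer (θ k) (θ 2) ≤ η (.play k) + η (.meas k k 1)) :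
    ∑ k ∈ Icc 3 K, (1 - θ 1) * (θ 2 - θ k) / klBer (θ k) (θ 2) ≤
      ∑ u ∈ allPolicies K, η u * ((-c + θ 1 + (1 - θ 1) * θ 2) - reward θ 0 c u) := by
  refine (sum_le_sum fun k hk ↦ ?_).trans (sum_play_add_meas_le_sum (m := 1)
    (Icc_subset_Icc_left (by norm_num)) (by simp; omega) fun u hu ↦
      mul_nonneg (hη0 u) (sub_nonneg.mpr (reward_le_of_mem_allPolicies hθ h2K hK0 h1 hc hu)))
  obtain ⟨h3, hkK⟩ := mem_Icc.mp hk
  have h21 : θ 2 ≤ θ 1 := hθ (by simp; omega) (by simp; omega) (by norm_num)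
  have hk2 : θ k ≤ θ 2 := hθ (by simp; omega) (by simp; omega) (by omega)
  have hθ1 : 0 ≤ θ 1 := hK0.trans (hθ (by simp; omega) (by simp; omega) (by omega))
  have hgap : 0 ≤ (1 - θ 1) * (θ 2 - θ k) := mul_nonneg (by linarith) (by linarith)
  -- measuring arm `k` and falling back on arm 1 loses exactly the gap, playing `k` at least it
  have hplay :
      (1 - θ 1) * (θ 2 - θ k) ≤ (-c + θ 1 + (1 - θ 1) * θ 2) - reward θ 0 c (.play k) := by
    rw [reward_play]
    nlinarith [mul_nonneg hθ1 (sub_nonneg.mpr hk2)]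
  have hmeas : (-c + θ 1 + (1 - θ 1) * θ 2) - reward θ 0 c (.meas k k 1) =
      (1 - θ 1) * (θ 2 - θ k) := by
    rw [reward_zero_meas_self θ c (by omega)]
    ring
  rw [hmeas, ← one_div_mul_eq_div]
  calc 1 / klBer (θ k) (θ 2) * ((1 - θ 1) * (θ 2 - θ k))
      ≤ (η (.play k) + η (.meas k k 1)) * ((1 - θ 1) * (θ 2 - θ k)) :=
        mul_le_mul_of_nonneg_right (hη k h3 hkK) hgap
    _ ≤ _ := by nlinarith [mul_le_mul_of_nonneg_left hplay (hη0 (.play k))]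

end Arms

theorem stmt6_general (K : ℕ) (hK : 3 ≤ K) (θ : ℕ → ℝ)
    (h1 : θ 1 < 1) (hKpos : 0 < θ K)
    (hmono : ∀ i, 1 ≤ i → i < K → θ (i + 1) < θ i)
    (c : ℝ) (hcopt : c < θ 2 * (1 - θ 1)) :
    IsLeast
      {x : ℝ | ∃ η : Policy → ℝ, (∀ u, 0 ≤ η u) ∧
        (∀ k, 3 ≤ k → k ≤ K →
          1 / klBer (θ k) (θ 2) ≤ η (.play k) + η (.meas k k 1)) ∧
        x = ∑ u ∈ allPolicies K,
          η u * ((-c + θ 1 + (1 - θ 1) * θ 2) - reward θ 0 c u)}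
      (∑ k ∈ Finset.Icc 3 K, (1 - θ 1) * (θ 2 - θ k) / klBer (θ k) (θ 2)) ∧
    (∀ u, 0 ≤ etaStar6 K θ u) ∧
    (∀ k, 3 ≤ k → k ≤ K →
      1 / klBer (θ k) (θ 2)
        ≤ etaStar6 K θ (.play k) + etaStar6 K θ (.meas k k 1)) ∧
    (∑ u ∈ allPolicies K,
        etaStar6 K θ u * ((-c + θ 1 + (1 - θ 1) * θ 2) - reward θ 0 c u)
      = ∑ k ∈ Finset.Icc 3 K, (1 - θ 1) * (θ 2 - θ k) / klBer (θ k) (θ 2)) := by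
  have hθ : AntitoneOn θ (Set.Icc 1 K) := antitoneOn_of_add_one_le Set.ordConnected_Icc
    fun i _ hi hi' ↦ (hmono i hi.1 (by simp at hi'; omega)).le
  have hI : ∀ k ∈ Icc 3 K, 0 ≤ klBer (θ k) (θ 2) := fun k hk ↦
    klBer_arm_nonneg hθ hKpos h1 (Icc_subset_Icc_left (by norm_num) hk)
  have hvalue : ∑ u ∈ allPolicies K,
      etaStar6 K θ u * ((-c + θ 1 + (1 - θ 1) * θ 2) - reward θ 0 c u) =
        ∑ k ∈ Icc 3 K, (1 - θ 1) * (θ 2 - θ k) / klBer (θ k) (θ 2) := by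
    rw [sum_etaStar6_mul]
    refine sum_congr rfl fun k hk ↦ ?_
    rw [reward_zero_meas_self θ c (by simp at hk; omega)]
    ring
  refine ⟨⟨⟨etaStar6 K θ, etaStar6_nonneg K θ hI, fun k ↦ le_etaStar6_play_add_meas K θ,
    hvalue.symm⟩, ?_⟩, etaStar6_nonneg K θ hI, fun k ↦ le_etaStar6_play_add_meas K θ, hvalue⟩
  rintro _ ⟨η, hη0, hη, rfl⟩
  exact sum_gap_div_klBer_le hθ (by omega) hKpos.le h1.le hcopt.le hη0 hη

/-- Case 1 (`u*(θ) = (1,2)`, perfect measurements) of the regret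
lower-bound optimization problem: minimizing `Σ_u η_u (μ* − μ(u))` over nonnegative `η`
subject to `η_{(k)} + η_{(k,1)} ≥ 1/I(θ_k,θ_2)` for `3 ≤ k ≤ K` has minimum value
`C(θ) = Σ_{k=3}^K (1−θ_1)(θ_2−θ_k)/I(θ_k,θ_2)`, attained at `η*` with
`η*_{(k,1)} = 1/I(θ_k,θ_2)` and all other coordinates zero. -/
theorem stmt6 (K : ℕ) (hK : 3 ≤ K) (θ : ℕ → ℝ)
    (h1 : θ 1 < 1) (hKpos : 0 < θ K)
    (hmono : ∀ i, 1 ≤ i → i < K → θ (i + 1) < θ i)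
    (c : ℝ) (hc : 0 < c) (hcopt : c < θ 2 * (1 - θ 1)) :
    IsLeast
      {x : ℝ | ∃ η : Policy → ℝ, (∀ u, 0 ≤ η u) ∧
        (∀ k, 3 ≤ k → k ≤ K →
          1 / klBer (θ k) (θ 2) ≤ η (.play k) + η (.meas k k 1)) ∧
        x = ∑ u ∈ allPolicies K,
          η u * ((-c + θ 1 + (1 - θ 1) * θ 2) - reward θ 0 c u)}
      (∑ k ∈ Finset.Icc 3 K, (1 - θ 1) * (θ 2 - θ k) / klBer (θ k) (θ 2)) ∧
    (∀ u, 0 ≤ etaStar6 K θ u) ∧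
    (∀ k, 3 ≤ k → k ≤ K →
      1 / klBer (θ k) (θ 2)
        ≤ etaStar6 K θ (.play k) + etaStar6 K θ (.meas k k 1)) ∧
    (∑ u ∈ allPolicies K,
        etaStar6 K θ u * ((-c + θ 1 + (1 - θ 1) * θ 2) - reward θ 0 c u)
      = ∑ k ∈ Finset.Icc 3 K, (1 - θ 1) * (θ 2 - θ k) / klBer (θ k) (θ 2)) :=
  stmt6_general K hK θ h1 hKpos hmono c hcopt
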